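/- Let Y be a metric space and x ∈ Y a non-isolated point with H(Y,x) > 0. Fix real numbers 0 < λ < H(Y,x) and 0 < ε ≤ R, where R > 0 is such that for every r ∈ (0,R] there exists u ∈ Y with λr ≤ d(x,u) ≤ r. Let E be a maximal ε-separated set in Y and let ψ(y) = d(y,E) for y ∈ Y. Then there exists u in the closed ball of radius ε around x such that |ψ(u) − ψ(x)| ≥ λε/8. -/
import Mathlib


open Metric Set Topology Filter

/-- The hermeticity of a metric space at a point:
`H(X,x) = liminf_{r→0⁺} (1/r)·sup_{u ∈ B(x,r)} d(u,x)`, in `[0,∞]`. -/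
noncomputable def herm {X : Type*} [MetricSpace X] (x : X) : ENNReal :=
  Filter.liminf (fun r : ℝ =>
    (⨆ u ∈ Metric.ball x r, ENNReal.ofReal (dist u x)) / ENNReal.ofReal r) (𝓝[>] (0 : ℝ))

/-- The hermeticity of a metric space: `H(X) = inf_{x ∈ X^d} H(X,x)`, the
infimum being taken over all non-isolated points of `X`. `X` is hermetic if
`H(X) > 0`. -/
noncomputable def hermSpace (X : Type*) [MetricSpace X] : ENNReal :=
  ⨅ x : {x : X // ¬ IsOpen ({x} : Set X)}, herm x.1

/-- A set `E` in a metric space is `ε`-separated if any two distinct points of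
`E` are at distance at least `ε`. -/
def IsEpsSeparated {Y : Type*} [MetricSpace Y] (ε : ℝ) (E : Set Y) : Prop :=
  ∀ s ∈ E, ∀ t ∈ E, s ≠ t → ε ≤ dist s t

/-- Let `x` be a non-isolated point of a metric space `Y` with `H(Y,x) > 0`,
let `0 < λ < H(Y,x)` and `0 < ε ≤ R`, where `R > 0` is such that every
`r ∈ (0,R]` admits `u` with `λr ≤ d(x,u) ≤ r`. If `E` is a maximal
`ε`-separated set in `Y` and `ψ(y) = d(y,E)`, then there is `u` in the closed
ball of radius `ε` around `x` with `|ψ(u) − ψ(x)| ≥ λε/8`. -/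
theorem maximal_separated_oscillation {Y : Type*} [MetricSpace Y] (x : Y)
    (hx : ¬ IsOpen ({x} : Set Y)) (hH : 0 < herm x)
    (lam ε R : ℝ) (hlam0 : 0 < lam) (hlam : ENNReal.ofReal lam < herm x)
    (hε0 : 0 < ε) (hεR : ε ≤ R) (hR0 : 0 < R)
    (hR : ∀ r ∈ Set.Ioc (0 : ℝ) R, ∃ u : Y, lam * r ≤ dist x u ∧ dist x u ≤ r)
    (E : Set Y) (hE : IsEpsSeparated ε E)
    (hEmax : ∀ T : Set Y, IsEpsSeparated ε T → E ⊆ T → T = E) :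
    ∃ u ∈ Metric.closedBall x ε,
      lam * ε / 8 ≤ |Metric.infDist u E - Metric.infDist x E| := by
  -- E is nonempty
  have hEne : E.Nonempty := by
    by_contra h
    have hEempty : E = ∅ := Set.not_nonempty_iff_eq_empty.mp h
    have : ({x} : Set Y) = E := by
      apply hEmax
      · intro s hs t ht hst
        simp only [Set.mem_singleton_iff] at hs ht
        exact absurd (hs.trans ht.symm) hst
      · simp [hEempty]
    simp [hEempty] at this
  -- λ ≤ 1
  have hlam1 : lam ≤ 1 := by
    obtain ⟨u, h1, h2⟩ := hR ε ⟨hε0, hεR⟩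
    nlinarith
  -- every point has infDist < ε
  have hψlt : ∀ y : Y, Metric.infDist y E < ε := by
    intro y
    by_contra h
    push_neg at h
    have hyE : y ∉ E := by
      intro hy
      have := Metric.infDist_zero_of_mem hy
      linarith
    have hsep : IsEpsSeparated ε (insert y E) := by
      intro s hs t ht hst
      rcases Set.mem_insert_iff.mp hs with rfl | hs'
      · rcases Set.mem_insert_iff.mp ht with rfl | ht'
        · exact absurd rfl hst
        · exact le_trans h (Metric.infDist_le_dist_of_mem ht')
      · rcases Set.mem_insert_iff.mp ht with rfl | ht'
        · rw [dist_comm]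
          exact le_trans h (Metric.infDist_le_dist_of_mem hs')
        · exact hE s hs' t ht' hst
    have := hEmax _ hsep (Set.subset_insert y E)
    exact hyE (this ▸ Set.mem_insert y E)
  set a := Metric.infDist x E with ha
  have ha0 : 0 ≤ a := Metric.infDist_nonneg
  by_cases hcase : lam * ε / 8 ≤ a
  · -- pick e ∈ E with dist x e < ε
    obtain ⟨e, heE, he⟩ := (Metric.infDist_lt_iff hEne).mp (hψlt x)
    refine ⟨e, ?_, ?_⟩
    · rw [Metric.mem_closedBall, dist_comm]
      exact le_of_lt he
    · rw [Metric.infDist_zero_of_mem heE]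
      rw [abs_of_nonpos (by linarith)]
      linarith
  · push_neg at hcase
    -- pick e0 ∈ E with dist x e0 < λε/8
    obtain ⟨e0, he0E, he0⟩ := (Metric.infDist_lt_iff hEne).mp
      (lt_of_eq_of_lt ha.symm hcase)
    obtain ⟨u, hu1, hu2⟩ := hR (ε / 2) ⟨by linarith, by linarith⟩
    refine ⟨u, ?_, ?_⟩
    · rw [Metric.mem_closedBall, dist_comm]
      linarith
    · have hub : lam * ε / 2 - lam * ε / 8 ≤ Metric.infDist u E := by
        by_contra h
        push_neg at h
        obtain ⟨e, heE, hd⟩ := (Metric.infDist_lt_iff hEne).mp h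
        revert hd
        rw [imp_false, not_lt]
        by_cases he : e = e0
        · subst he
          have : dist x u ≤ dist x e + dist e u := dist_triangle x e u
          rw [dist_comm e u] at this
          nlinarith
        · have hsep := hE e heE e0 he0E he
          have h1 : dist e e0 ≤ dist e u + dist u x + dist x e0 :=
            dist_triangle4 e u x e0
          rw [dist_comm e u, dist_comm u x] at h1
          nlinarith
      have h0 : 0 ≤ Metric.infDist u E - a := by nlinarith
      rw [abs_of_nonneg h0]
      nlinarith
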